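/- arXiv:1101.3499 — 2 statements merged into one kernel-verified Lean document; each statement's English description precedes it below -/
import Mathlib

section
/- For every (v,u) ∈ ℝ^d × S₀^d one has |v|²/2 ≤ e(v,u), with equality if and only if u = v⊗v − (|v|²/d)·I_d. -/
/-- The largest eigenvalue of a real symmetric matrix. -/
noncomputable def lambdaMax {d : ℕ} (A : Matrix (Fin d) (Fin d) ℝ) : ℝ :=
  sSup {μ : ℝ | ∃ x : Fin d → ℝ, x ≠ 0 ∧ A.mulVec x = μ • x}

/-- The generalised energy `e(v,u) = (d/2) λ_max(v ⊗ v - u)`. -/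
noncomputable def genE {d : ℕ} (v : Fin d → ℝ) (u : Matrix (Fin d) (Fin d) ℝ) : ℝ :=
  ((d : ℝ) / 2) * lambdaMax (Matrix.vecMulVec v v - u)

/-!
`A = v ⊗ v - u` is symmetric with trace `|v|²`, so its largest eigenvalue is at least the mean
`|v|² / d` of its eigenvalues. Equality forces every eigenvalue to equal the largest one, and by the
spectral theorem a symmetric matrix with a single eigenvalue `c` is `c • 1`.
-/

namespace Matrix

theorem setOf_exists_mulVec_eq_smul_eq_spectrum {K n : Type*} [Field K] [Fintype n]
    [DecidableEq n] (A : Matrix n n K) :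
    {μ : K | ∃ x : n → K, x ≠ 0 ∧ A *ᵥ x = μ • x} = spectrum K A := by
  ext μ
  rw [Set.mem_ofPred_eq, ← spectrum_toLin', ← Module.End.hasEigenvalue_iff_mem_spectrum]
  constructor
  · rintro ⟨x, hx, hAx⟩
    exact Module.End.hasEigenvalue_of_hasEigenvector ⟨Module.End.mem_eigenspace_iff.2 hAx, hx⟩
  · intro hμ
    obtain ⟨x, hx_mem, hx⟩ := hμ.exists_hasEigenvector
    exact ⟨x, hx, Module.End.mem_eigenspace_iff.1 hx_mem⟩

theorem IsHermitian.eq_smul_one_of_eigenvalues_eq {𝕜 n : Type*} [RCLike 𝕜] [Fintype n]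
    [DecidableEq n] {A : Matrix n n 𝕜} (hA : A.IsHermitian) {c : ℝ}
    (h : ∀ i, hA.eigenvalues i = c) : A = (c : 𝕜) • 1 := by
  have hdiag : diagonal (RCLike.ofReal ∘ hA.eigenvalues) = (c : 𝕜) • (1 : Matrix n n 𝕜) := by
    rw [smul_one_eq_diagonal]
    exact congrArg diagonal (funext fun i => by simp [h i])
  rw [hA.spectral_theorem, hdiag, map_smul, map_one]

variable {d : ℕ}

theorem IsHermitian.lambdaMax_eq_sSup_range_eigenvalues {A : Matrix (Fin d) (Fin d) ℝ}
    (hA : A.IsHermitian) : lambdaMax A = sSup (Set.range hA.eigenvalues) := by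
  rw [lambdaMax, setOf_exists_mulVec_eq_smul_eq_spectrum, hA.spectrum_real_eq_range_eigenvalues]

theorem IsHermitian.eigenvalues_le_lambdaMax {A : Matrix (Fin d) (Fin d) ℝ}
    (hA : A.IsHermitian) (i : Fin d) : hA.eigenvalues i ≤ lambdaMax A := by
  rw [hA.lambdaMax_eq_sSup_range_eigenvalues]
  exact le_csSup (Set.finite_range _).bddAbove ⟨i, rfl⟩

theorem lambdaMax_smul_one [NeZero d] (c : ℝ) :
    lambdaMax (c • 1 : Matrix (Fin d) (Fin d) ℝ) = c := by
  rw [lambdaMax, setOf_exists_mulVec_eq_smul_eq_spectrum, ← Algebra.algebraMap_eq_smul_one,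
    spectrum.scalar_eq, csSup_singleton]

theorem IsHermitian.trace_le_mul_lambdaMax {A : Matrix (Fin d) (Fin d) ℝ} (hA : A.IsHermitian) :
    A.trace ≤ d * lambdaMax A := by
  calc A.trace = ∑ i, hA.eigenvalues i := by simpa using hA.trace_eq_sum_eigenvalues
    _ ≤ ∑ _i : Fin d, lambdaMax A := Finset.sum_le_sum fun i _ => hA.eigenvalues_le_lambdaMax i
    _ = d * lambdaMax A := by simp

theorem IsHermitian.trace_eq_mul_lambdaMax_iff [NeZero d] {A : Matrix (Fin d) (Fin d) ℝ}
    (hA : A.IsHermitian) : A.trace = d * lambdaMax A ↔ A = (A.trace / d) • 1 := by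
  have hd : (d : ℝ) ≠ 0 := NeZero.ne _
  constructor
  · intro h
    have hsum : ∑ i, hA.eigenvalues i = ∑ _i : Fin d, lambdaMax A := by
      simpa [← h] using hA.trace_eq_sum_eigenvalues.symm
    have hall : ∀ i, hA.eigenvalues i = lambdaMax A := fun i =>
      (Finset.sum_eq_sum_iff_of_le fun i _ => hA.eigenvalues_le_lambdaMax i).1 hsum i
        (Finset.mem_univ i)
    have hlam : lambdaMax A = A.trace / d := by rw [h, mul_div_cancel_left₀ _ hd]
    simpa [hlam] using hA.eq_smul_one_of_eigenvalues_eq hall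
  · intro h
    conv_rhs => rw [h, lambdaMax_smul_one]
    rw [mul_div_cancel₀ _ hd]

end Matrix

open Matrix in
theorem stmt_2 {d : ℕ} (hd : 2 ≤ d)
    (v : Fin d → ℝ) (u : Matrix (Fin d) (Fin d) ℝ)
    (hus : u.IsSymm) (hut : u.trace = 0) :
    (∑ i, v i ^ 2) / 2 ≤ genE v u ∧
      ((∑ i, v i ^ 2) / 2 = genE v u ↔
        u = Matrix.vecMulVec v v - ((∑ i, v i ^ 2) / d) • (1 : Matrix (Fin d) (Fin d) ℝ)) := by
  have : NeZero d := ⟨by omega⟩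
  set A := vecMulVec v v - u
  have hA : A.IsHermitian := isHermitian_iff_isSymm.2 (IsSymm.sub (transpose_vecMulVec v v) hus)
  have htr : A.trace = ∑ i, v i ^ 2 := by simp [A, trace_sub, hut, dotProduct, sq]
  have hE : genE v u = d / 2 * lambdaMax A := rfl
  refine ⟨by linarith [hA.trace_le_mul_lambdaMax], ?_⟩
  calc (∑ i, v i ^ 2) / 2 = genE v u ↔ A.trace = d * lambdaMax A := by
        rw [hE, htr]; constructor <;> intro h <;> linarith
    _ ↔ A = (A.trace / d) • 1 := hA.trace_eq_mul_lambdaMax_iff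
    _ ↔ _ := by rw [htr, sub_eq_iff_eq_add, eq_sub_iff_add_eq, add_comm, eq_comm]
end

section
/- For every (v,u) ∈ ℝ^d × S₀^d, the operator norm of u satisfies |u|_∞ ≤ 2·((d−1)/d)·e(v,u). In particular e(v,u) ≥ 0. -/
/-- The operator norm of a real symmetric matrix: the largest absolute value of an eigenvalue. -/
noncomputable def opNorm {d : ℕ} (A : Matrix (Fin d) (Fin d) ℝ) : ℝ :=
  sSup {r : ℝ | ∃ (μ : ℝ) (x : Fin d → ℝ), x ≠ 0 ∧ A.mulVec x = μ • x ∧ r = |μ|}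

open Matrix

section SumEqZero

variable {ι : Type*} [Fintype ι] {f : ι → ℝ} {M : ℝ}

theorem le_card_sub_one_mul_of_sum_eq_zero (hsum : ∑ i, f i = 0) (hlb : ∀ i, -M ≤ f i) (j : ι) :
    f j ≤ (Fintype.card ι - 1) * M := by
  classical
  have hrest : -((Fintype.card ι - 1 : ℝ) * M) ≤ ∑ i ∈ Finset.univ.erase j, f i := by
    have := Finset.card_nsmul_le_sum (Finset.univ.erase j) f (-M) fun i _ => hlb i
    rw [Finset.card_erase_of_mem (Finset.mem_univ j), Finset.card_univ, nsmul_eq_mul,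
      Nat.cast_sub (Fintype.card_pos_iff.2 ⟨j⟩), Nat.cast_one] at this
    linarith
  linarith [Finset.add_sum_erase Finset.univ f (Finset.mem_univ j)]

theorem nonneg_of_sum_eq_zero_of_neg_le [Nonempty ι] (hsum : ∑ i, f i = 0)
    (hlb : ∀ i, -M ≤ f i) : 0 ≤ M := by
  have := Finset.card_nsmul_le_sum Finset.univ f (-M) fun i _ => hlb i
  rw [hsum, nsmul_eq_mul, Finset.card_univ] at this
  nlinarith [(Nat.cast_pos.2 Fintype.card_pos : (0 : ℝ) < Fintype.card ι)]

theorem abs_le_card_sub_one_mul_of_sum_eq_zero (hcard : 2 ≤ Fintype.card ι)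
    (hsum : ∑ i, f i = 0) (hlb : ∀ i, -M ≤ f i) (j : ι) :
    |f j| ≤ (Fintype.card ι - 1) * M := by
  have : Nonempty ι := Fintype.card_pos_iff.1 (by omega)
  have hM := nonneg_of_sum_eq_zero_of_neg_le hsum hlb
  have hcard' : (2 : ℝ) ≤ Fintype.card ι := by exact_mod_cast hcard
  refine abs_le.2 ⟨?_, le_card_sub_one_mul_of_sum_eq_zero hsum hlb j⟩
  nlinarith [hlb j]

end SumEqZero

theorem Matrix.mem_spectrum_iff_exists_mulVec_eq_smul {K n : Type*} [Field K] [Fintype n]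
    [DecidableEq n] {A : Matrix n n K} {μ : K} :
    μ ∈ spectrum K A ↔ ∃ x, x ≠ 0 ∧ A *ᵥ x = μ • x := by
  simp only [← spectrum_toLin', ← Module.End.hasEigenvalue_iff_mem_spectrum,
    Module.End.hasEigenvalue_iff, Submodule.ne_bot_iff, Module.End.mem_eigenspace_iff,
    toLin'_apply]
  exact exists_congr fun _ => and_comm

section SymmetricMatrix

variable {d : ℕ}

theorem lambdaMax_eq_sSup_spectrum (A : Matrix (Fin d) (Fin d) ℝ) :
    lambdaMax A = sSup (spectrum ℝ A) := by
  simp only [lambdaMax, ← mem_spectrum_iff_exists_mulVec_eq_smul, Set.ofPred_mem_eq]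

theorem le_lambdaMax {A : Matrix (Fin d) (Fin d) ℝ} {μ : ℝ} (hμ : μ ∈ spectrum ℝ A) :
    μ ≤ lambdaMax A :=
  lambdaMax_eq_sSup_spectrum A ▸ le_csSup A.finite_spectrum.bddAbove hμ

theorem dotProduct_mulVec_le_lambdaMax_mul {A : Matrix (Fin d) (Fin d) ℝ} (hA : A.IsHermitian)
    (x : Fin d → ℝ) : x ⬝ᵥ A *ᵥ x ≤ lambdaMax A * (x ⬝ᵥ x) := by
  have hpsd : (algebraMap ℝ (Matrix (Fin d) (Fin d) ℝ) (lambdaMax A) - A).PosSemidef := by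
    refine posSemidef_iff_isHermitian_and_spectrum_nonneg.2 ⟨?_, ?_⟩
    · exact IsHermitian.sub (by rw [algebraMap_eq_diagonal]; exact isHermitian_diagonal _) hA
    · rw [← spectrum.singleton_sub_eq]
      rintro _ ⟨_, rfl, μ, hμ, rfl⟩
      exact sub_nonneg.2 (le_lambdaMax hμ)
  have := hpsd.dotProduct_mulVec_nonneg x
  simp only [star_trivial, sub_mulVec, Algebra.algebraMap_eq_smul_one, smul_mulVec, one_mulVec,
    dotProduct_sub, dotProduct_smul, smul_eq_mul] at this
  linarith

theorem neg_lambdaMax_sub_le_of_mem_spectrum {P u : Matrix (Fin d) (Fin d) ℝ} (hP : P.PosSemidef)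
    (hu : u.IsHermitian) {μ : ℝ} (hμ : μ ∈ spectrum ℝ u) : -lambdaMax (P - u) ≤ μ := by
  obtain ⟨x, hx, hux⟩ := mem_spectrum_iff_exists_mulVec_eq_smul.1 hμ
  have hxx : 0 < x ⬝ᵥ x := by simpa using dotProduct_self_star_pos_iff.2 hx
  have hray := dotProduct_mulVec_le_lambdaMax_mul (hP.isHermitian.sub hu) x
  have hPx := hP.dotProduct_mulVec_nonneg x
  rw [star_trivial] at hPx
  rw [sub_mulVec, dotProduct_sub, hux, dotProduct_smul, smul_eq_mul] at hray
  nlinarith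

theorem opNorm_le {A : Matrix (Fin d) (Fin d) ℝ} {C : ℝ} (hC : 0 ≤ C)
    (h : ∀ μ ∈ spectrum ℝ A, |μ| ≤ C) : opNorm A ≤ C := by
  refine Real.sSup_le ?_ hC
  rintro _ ⟨μ, x, hx, hAx, rfl⟩
  exact h μ (mem_spectrum_iff_exists_mulVec_eq_smul.2 ⟨x, hx, hAx⟩)

end SymmetricMatrix

theorem stmt_3 {d : ℕ} (hd : 2 ≤ d)
    (v : Fin d → ℝ) (u : Matrix (Fin d) (Fin d) ℝ)
    (hus : u.IsSymm) (hut : u.trace = 0) :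
    opNorm u ≤ 2 * (((d : ℝ) - 1) / d) * genE v u ∧ 0 ≤ genE v u := by
  have hu : u.IsHermitian := isHermitian_iff_isSymm.2 hus
  set M := lambdaMax (vecMulVec v v - u)
  have hsum : ∑ i, hu.eigenvalues i = 0 := by simpa [hu.trace_eq_sum_eigenvalues] using hut
  have hlb (i : Fin d) : -M ≤ hu.eigenvalues i :=
    neg_lambdaMax_sub_le_of_mem_spectrum (posSemidef_vecMulVec_self_star v) hu
      (hu.eigenvalues_mem_spectrum_real i)
  have : Nonempty (Fin d) := ⟨⟨0, by omega⟩⟩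
  have hM : 0 ≤ M := nonneg_of_sum_eq_zero_of_neg_le hsum hlb
  have hgenE : genE v u = d / 2 * M := rfl
  refine ⟨?_, by rw [hgenE]; positivity⟩
  have hd2 : (2 : ℝ) ≤ d := by exact_mod_cast hd
  rw [hgenE, show 2 * ((d - 1) / d) * (d / 2 * M) = ((d : ℝ) - 1) * M by field_simp]
  refine opNorm_le (mul_nonneg (by linarith) hM) fun μ hμ => ?_
  obtain ⟨i, rfl⟩ := hu.spectrum_real_eq_range_eigenvalues ▸ hμ
  simpa using abs_le_card_sub_one_mul_of_sum_eq_zero (by simpa using hd) hsum hlb i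
end
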